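/- The function E(α, β) = Λ(α) + Λ(β) + Λ(π − α − β) on D = {(α, β) : α > 0, β > 0, α + β < π} attains its unique maximum at α = β = π/3, with maximum value 3Λ(π/3). -/

import Mathlib

/-!
Along each line `a + b = s` with `s < π`, the function `a ↦ Λ(a) + Λ(s - a)` has derivative
`log (sin (s - a) / sin a)`, which changes sign exactly at `a = s / 2`; so `E` is maximised on the
diagonal. On the diagonal, `x ↦ E(x, x) = 2 Λ(x) + Λ(π - 2x)` has derivative
`2 log (sin (π - 2x) / sin x)`, which changes sign exactly at `x = π / 3`. Both sign changes
come from the same comparison: `sin u < sin v` whenever `0 < u < v` and `u + v < π`.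
-/

open Real MeasureTheory intervalIntegral Matrix

/-- The Lobachevsky function. -/
noncomputable def lob (x : ℝ) : ℝ := -∫ t in (0:ℝ)..x, Real.log |2 * Real.sin t|

/-- The hyperbolic volume energy of a Euclidean triangle with angles a, b, π - a - b. -/
noncomputable def Etri (a b : ℝ) : ℝ := lob a + lob b + lob (Real.pi - a - b)

open Set

theorem lt_of_hasDerivAt_pos_of_neg {f f' : ℝ → ℝ} {a b c x : ℝ} (hc : c ∈ Ioo a b)
    (hf : ∀ y ∈ Ioo a b, HasDerivAt f (f' y) y) (hpos : ∀ y ∈ Ioo a c, 0 < f' y)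
    (hneg : ∀ y ∈ Ioo c b, f' y < 0) (hx : x ∈ Ioo a b) (hxc : x ≠ c) : f x < f c := by
  have hcont : ContinuousOn f (Ioo a b) := fun y hy => (hf y hy).continuousAt.continuousWithinAt
  rcases hxc.lt_or_gt with hlt | hgt
  · have hIoc : Ioc a c ⊆ Ioo a b := Ioc_subset_Ioo_right hc.2
    refine strictMonoOn_of_hasDerivWithinAt_pos (f' := f') (convex_Ioc a c) (hcont.mono hIoc) ?_ ?_
      ⟨hx.1, hlt.le⟩ ⟨hc.1, le_rfl⟩ hlt
    · rw [interior_Ioc]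
      exact fun y hy => (hf y (Ioo_subset_Ioo_right hc.2.le hy)).hasDerivWithinAt
    · rwa [interior_Ioc]
  · have hIco : Ico c b ⊆ Ioo a b := Ico_subset_Ioo_left hc.1
    refine strictAntiOn_of_hasDerivWithinAt_neg (f' := f') (convex_Ico c b) (hcont.mono hIco) ?_ ?_
      ⟨le_rfl, hc.2⟩ ⟨hgt.le, hx.2⟩ hgt
    · rw [interior_Ico]
      exact fun y hy => (hf y (Ioo_subset_Ioo_left hc.1.le hy)).hasDerivWithinAt
    · rwa [interior_Ico]

theorem sin_lt_sin_of_lt_of_add_lt_pi {u v : ℝ} (hu : 0 < u) (huv : u < v) (h : u + v < π) :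
    sin u < sin v := by
  rcases le_or_gt v (π / 2) with hv | hv
  · exact sin_lt_sin_of_lt_of_le_pi_div_two (by linarith) hv huv
  · rw [← sin_pi_sub v]
    exact sin_lt_sin_of_lt_of_le_pi_div_two (by linarith) (by linarith) (by linarith)

theorem log_two_mul_sin_lt {u v : ℝ} (hu : 0 < u) (huv : u < v) (h : u + v < π) :
    log (2 * sin u) < log (2 * sin v) := by
  have hsin := sin_lt_sin_of_lt_of_add_lt_pi hu huv h
  have : 0 < sin u := sin_pos_of_pos_of_lt_pi hu (by linarith)
  exact log_lt_log (by positivity) (by linarith)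

theorem intervalIntegrable_log_abs_two_mul_sin (a b : ℝ) :
    IntervalIntegrable (fun t => log |2 * sin t|) volume a b :=
  (analyticOnNhd_const.mul analyticOnNhd_sin).meromorphicOn.intervalIntegrable_log_norm

theorem hasDerivAt_lob {x : ℝ} (hx : sin x ≠ 0) : HasDerivAt lob (-log (2 * sin x)) x := by
  have hcont : ContinuousAt (fun t => log |2 * sin t|) x :=
    (continuous_const.mul continuous_sin).abs.continuousAt.log (by simpa using hx)
  have hmeas : StronglyMeasurableAtFilter (fun t => log |2 * sin t|) (nhds x) volume :=
    (continuous_const.mul continuous_sin).abs.measurable.log.stronglyMeasurable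
      |>.stronglyMeasurableAtFilter
  rw [← log_abs]
  exact (integral_hasDerivAt_right (intervalIntegrable_log_abs_two_mul_sin 0 x) hmeas hcont).neg

theorem lob_add_lob_lt {a b : ℝ} (ha : 0 < a) (hb : 0 < b) (hab : a + b < π) (hne : a ≠ b) :
    lob a + lob b < 2 * lob ((a + b) / 2) := by
  set s := a + b
  have hder : ∀ y ∈ Ioo 0 s, HasDerivAt (fun y => lob y + lob (s - y))
      (-log (2 * sin y) + log (2 * sin (s - y))) y := fun y hy => by
    have h₁ := hasDerivAt_lob (sin_pos_of_pos_of_lt_pi hy.1 (by linarith [hy.2])).ne'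
    have h₂ := (hasDerivAt_lob (sin_pos_of_pos_of_lt_pi (sub_pos.2 hy.2)
      (by linarith [hy.1])).ne').comp y ((hasDerivAt_id' y).const_sub s)
    exact (h₁.add h₂).congr_deriv (by ring)
  have hmid := lt_of_hasDerivAt_pos_of_neg (c := s / 2) ⟨by linarith, by linarith⟩ hder
    (fun y hy => by
      linarith [log_two_mul_sin_lt (v := s - y) hy.1 (by linarith [hy.2]) (by linarith)])
    (fun y hy => by
      linarith [log_two_mul_sin_lt (u := s - y) (v := y) (by linarith [hy.2]) (by linarith [hy.1])
        (by linarith)])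
    ⟨ha, by linarith⟩ (by intro h; apply hne; linarith)
  simp only [s, add_sub_cancel_left, show a + b - (a + b) / 2 = (a + b) / 2 by ring] at hmid
  linarith

theorem Etri_lt_Etri_midpoint {a b : ℝ} (ha : 0 < a) (hb : 0 < b) (hab : a + b < π)
    (hne : a ≠ b) : Etri a b < Etri ((a + b) / 2) ((a + b) / 2) := by
  have := lob_add_lob_lt ha hb hab hne
  unfold Etri
  rw [show π - (a + b) / 2 - (a + b) / 2 = π - a - b by ring]
  linarith

theorem Etri_diag_lt {x : ℝ} (hx₀ : 0 < x) (hx : x < π / 2) (hne : x ≠ π / 3) :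
    Etri x x < Etri (π / 3) (π / 3) := by
  have hder : ∀ y ∈ Ioo 0 (π / 2), HasDerivAt (fun y => Etri y y)
      (2 * (log (2 * sin (π - y - y)) - log (2 * sin y))) y := fun y hy => by
    have h₁ := hasDerivAt_lob (sin_pos_of_pos_of_lt_pi hy.1 (by linarith [hy.2])).ne'
    have hlin : HasDerivAt (fun y => π - y - y) (-1 - 1) y :=
      ((hasDerivAt_id' y).const_sub π).sub (hasDerivAt_id' y)
    have h₂ := (hasDerivAt_lob (sin_pos_of_pos_of_lt_pi (by linarith [hy.2])
      (by linarith [hy.1])).ne').comp y hlin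
    exact ((h₁.add h₁).add h₂).congr_deriv (by ring)
  exact lt_of_hasDerivAt_pos_of_neg ⟨by positivity, by linarith [pi_pos]⟩ hder
    (fun y hy => by
      linarith [log_two_mul_sin_lt (v := π - y - y) hy.1 (by linarith [hy.2])
        (by linarith [hy.1])])
    (fun y hy => by
      linarith [log_two_mul_sin_lt (u := π - y - y) (v := y) (by linarith [hy.2])
        (by linarith [hy.1]) (by linarith [hy.1])])
    ⟨hx₀, hx⟩ hne

theorem Etri_max :
    ((Real.pi / 3, Real.pi / 3) ∈ {p : ℝ × ℝ | 0 < p.1 ∧ 0 < p.2 ∧ p.1 + p.2 < Real.pi}) ∧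
    Etri (Real.pi / 3) (Real.pi / 3) = 3 * lob (Real.pi / 3) ∧
    ∀ p ∈ {p : ℝ × ℝ | 0 < p.1 ∧ 0 < p.2 ∧ p.1 + p.2 < Real.pi},
      p ≠ (Real.pi / 3, Real.pi / 3) →
        Etri p.1 p.2 < Etri (Real.pi / 3) (Real.pi / 3) := by
  have hpi := pi_pos
  refine ⟨⟨by positivity, by positivity, by linarith⟩, ?_, ?_⟩
  · rw [Etri, show π - π / 3 - π / 3 = π / 3 by ring]
    ring
  rintro ⟨a, b⟩ ⟨ha, hb, hab⟩ hne
  dsimp only at ha hb hab ⊢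
  rcases eq_or_ne a b with rfl | hab_ne
  · exact Etri_diag_lt ha (by linarith) (fun h => hne (by rw [h]))
  · calc Etri a b < Etri ((a + b) / 2) ((a + b) / 2) :=
          Etri_lt_Etri_midpoint ha hb hab hab_ne
      _ ≤ Etri (π / 3) (π / 3) := by
        rcases eq_or_ne ((a + b) / 2) (π / 3) with h | h
        · rw [h]
        · exact (Etri_diag_lt (by positivity) (by linarith) h).le
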